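/- Let 0 < r <= 1 and define g(l) = r^{2^l}(1-r^{2^l}) f(l) + r^{2^{l+1}}, where f satisfies f(l) <= 1 + r^{-2^l}. Then g(l) <= 1 for all l >= 2; consequently the expected number of join-items at level l valid for both of two patterns with overlap fraction r is at most n/2^l. -/

import Mathlib

/-! With `x = r ^ 2 ^ l ∈ (0, 1]`, the bound on `f l` gives
`x (1 - x) f l ≤ x (1 - x) (1 + 1 / x) = 1 - x ^ 2`, and `r ^ 2 ^ (l + 1) = x ^ 2`. -/

lemma mul_one_sub_mul_add_sq_le_one {x F : ℝ} (hx0 : 0 < x) (hx1 : x ≤ 1)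
    (hF : F ≤ 1 + 1 / x) : x * (1 - x) * F + x ^ 2 ≤ 1 := by
  have hcoef : 0 ≤ x * (1 - x) := mul_nonneg hx0.le (sub_nonneg.mpr hx1)
  calc x * (1 - x) * F + x ^ 2 ≤ x * (1 - x) * (1 + 1 / x) + x ^ 2 := by gcongr
    _ = 1 := by field_simp; ring

theorem stmt_12_general (r : ℝ) (hr0 : 0 < r) (hr1 : r ≤ 1) (n : ℝ) (hn : 0 ≤ n)
    (f g : ℕ → ℝ) (l : ℕ)
    (hf : f l ≤ 1 + 1 / r ^ 2 ^ l)
    (hg : g l = r ^ 2 ^ l * (1 - r ^ 2 ^ l) * f l + r ^ 2 ^ (l + 1)) :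
    g l ≤ 1 ∧ n / 2 ^ l * g l ≤ n / 2 ^ l := by
  have hsq : r ^ 2 ^ (l + 1) = (r ^ 2 ^ l) ^ 2 := by rw [pow_succ, pow_mul]
  have hg1 : g l ≤ 1 := by
    rw [hg, hsq]
    exact mul_one_sub_mul_add_sq_le_one (pow_pos hr0 _) (pow_le_one₀ hr0.le hr1) hf
  exact ⟨hg1, mul_le_of_le_one_right (by positivity) hg1⟩

/-- For `r ∈ (0,1]` and `l ≥ 2`, if `f l ≤ 1 + 1/r^(2^l)` and
`g l = r^(2^l)*(1-r^(2^l))*f l + r^(2^(l+1))`, then `g l ≤ 1`; consequently the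
expected number of join-items at level `l` valid for both patterns, which equals
`(n/2^l) * g l`, is at most `n/2^l`. -/
theorem stmt_12 (r : ℝ) (hr0 : 0 < r) (hr1 : r ≤ 1) (n : ℝ) (hn : 0 ≤ n)
    (f g : ℕ → ℝ) (l : ℕ) (hl : 2 ≤ l)
    (hf : f l ≤ 1 + 1 / r ^ 2 ^ l)
    (hg : g l = r ^ 2 ^ l * (1 - r ^ 2 ^ l) * f l + r ^ 2 ^ (l + 1)) :
    g l ≤ 1 ∧ n / 2 ^ l * g l ≤ n / 2 ^ l :=
  stmt_12_general r hr0 hr1 n hn f g l hf hg
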